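/- arXiv:1111.1696 — 2 statements merged into one kernel-verified Lean document; each statement's English description precedes it below -/
import Mathlib

section
/- In the braid group B_q, for 2 ≤ r < q, the element (Π_{r-1})^{-r} · (Π_{q-1})^p equals the positive word Π_{q-1}^r · Π_{q-2}^{r-1} ⋯ Π_{q-r+1}^2 · Π_{q-r} · (Π_{q-1})^{p-r} for any integer p ≥ r. Consequently the twisted torus knot braid (Π_{r-1})^{-r} (Π_{q-1})^p is a positive braid when p ≥ r. -/
/-- Defining relations for the braid group `B n` on `n` strands, with Artin
generators `σ_1, …, σ_{n-1}`.  Generators with index `0` or `≥ n` are killed,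
so the presented group is exactly `B n`. -/
def braidRels (n : ℕ) : Set (FreeGroup ℕ) :=
  {r | (∃ i, 1 ≤ i ∧ i + 2 ≤ n ∧
        r = FreeGroup.of i * FreeGroup.of (i + 1) * FreeGroup.of i *
            (FreeGroup.of (i + 1) * FreeGroup.of i * FreeGroup.of (i + 1))⁻¹) ∨
      (∃ i j, 1 ≤ i ∧ i + 2 ≤ j ∧ j + 1 ≤ n ∧
        r = FreeGroup.of i * FreeGroup.of j * (FreeGroup.of j * FreeGroup.of i)⁻¹) ∨
      (∃ i, (i = 0 ∨ n ≤ i) ∧ r = FreeGroup.of i)}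

/-- The braid group on `n` strands. -/
def BraidGroup (n : ℕ) : Type := PresentedGroup (braidRels n)

instance (n : ℕ) : Group (BraidGroup n) := by unfold BraidGroup; infer_instance

/-- The Artin generator `σ_i` of `B n`. -/
def sigma (n i : ℕ) : BraidGroup n := PresentedGroup.of i

/-- `Π_s^l = σ_l σ_{l+1} ⋯ σ_s`  (the identity when `s < l`). -/
def Pi' (n l s : ℕ) : BraidGroup n := ((List.range' l (s + 1 - l)).map (sigma n)).prod

/-- `Δ_s^l = Π_s^l Π_{s-1}^l ⋯ Π_l^l`  (the identity when `s < l`). -/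
def Delta (n l s : ℕ) : BraidGroup n :=
  ((List.range (s + 1 - l)).map (fun k => Pi' n l (s - k))).prod

/-!
Conjugation by `Π_{q-1}` shifts `σ_i` to `σ_{i+1}`, hence `Π_{q-1}^k Π_s^l = Π_{s+k}^{l+k} Π_{q-1}^k`.
Since `Π_{r-1}⁻¹ Π_{q-1} = Π_{q-1}^r`, moving one factor `Π_{r-1}⁻¹ Π_{q-1}` at a time past the
powers of `Π_{q-1}` gives `Π_{r-1}^{-k} Π_{q-1}^k = Π_{q-1}^r Π_{q-2}^{r-1} ⋯ Π_{q-k}^{r-k+1}`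
for `k ≤ r`; the product of positive words that results at `k = r` is visibly positive.
-/

lemma SemiconjBy.list_prod_map {M ι : Type*} [Monoid M] {a : M} {f g : ι → M} (l : List ι)
    (h : ∀ i ∈ l, SemiconjBy a (f i) (g i)) : SemiconjBy a (l.map f).prod (l.map g).prod := by
  induction l with
  | nil => exact SemiconjBy.one_right a
  | cons i l ih =>
    simpa using (h i List.mem_cons_self).mul_right (ih fun j hj => h j (List.mem_cons_of_mem i hj))

section ArtinGenerators

variable {n : ℕ}

lemma sigma_braid {i : ℕ} (h1 : 1 ≤ i) (h2 : i + 2 ≤ n) :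
    sigma n i * sigma n (i + 1) * sigma n i = sigma n (i + 1) * sigma n i * sigma n (i + 1) := by
  refine mul_inv_eq_one.mp ((QuotientGroup.eq_one_iff _).mpr (Subgroup.subset_normalClosure ?_))
  exact Or.inl ⟨i, h1, h2, rfl⟩

lemma sigma_commute {i j : ℕ} (h1 : 1 ≤ i) (h2 : i + 2 ≤ j) (h3 : j + 1 ≤ n) :
    Commute (sigma n i) (sigma n j) := by
  refine mul_inv_eq_one.mp ((QuotientGroup.eq_one_iff _).mpr (Subgroup.subset_normalClosure ?_))
  exact Or.inr (Or.inl ⟨i, j, h1, h2, h3, rfl⟩)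

lemma Pi'_self (i : ℕ) : Pi' n i i = sigma n i := by
  simp [Pi']

lemma Pi'_eq_mul {l m s : ℕ} (h1 : l ≤ m + 1) (h2 : m ≤ s) :
    Pi' n l s = Pi' n l m * Pi' n (m + 1) s := by
  have e := List.range'_append (s := l) (m := m + 1 - l) (n := s + 1 - (m + 1)) (step := 1)
  rw [show l + 1 * (m + 1 - l) = m + 1 by omega,
    show m + 1 - l + (s + 1 - (m + 1)) = s + 1 - l by omega] at e
  rw [Pi', Pi', Pi', ← e, List.map_append, List.prod_append]

lemma Pi'_eq_sigma_mul {l s : ℕ} (h : l ≤ s) : Pi' n l s = sigma n l * Pi' n (l + 1) s := by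
  rw [Pi'_eq_mul (m := l) (by omega) h, Pi'_self]

lemma commute_sigma_Pi' {m l s : ℕ} (h : ∀ j, l ≤ j → j ≤ s → Commute (sigma n m) (sigma n j)) :
    Commute (sigma n m) (Pi' n l s) := by
  refine Commute.list_prod_right _ _ fun x hx => ?_
  obtain ⟨j, hj, rfl⟩ := List.mem_map.mp hx
  rw [List.mem_range'_1] at hj
  exact h j hj.1 (by omega)

lemma Pi_semiconjBy_sigma {i : ℕ} (h1 : 1 ≤ i) (h2 : i + 2 ≤ n) :
    SemiconjBy (Pi' n 1 (n - 1)) (sigma n i) (sigma n (i + 1)) := by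
  set a := sigma n i
  set b := sigma n (i + 1)
  set A := Pi' n 1 (i - 1)
  set T := Pi' n (i + 2) (n - 1)
  have hPi : Pi' n 1 (n - 1) = A * (a * (b * T)) := by
    rw [Pi'_eq_mul (l := 1) (m := i - 1) (s := n - 1) (by omega) (by omega),
      Nat.sub_add_cancel h1, Pi'_eq_sigma_mul (l := i) (s := n - 1) (by omega),
      Pi'_eq_sigma_mul (l := i + 1) (s := n - 1) (by omega)]
  have hT : Commute a T := commute_sigma_Pi' fun j hj _ => sigma_commute h1 (by omega) (by omega)
  have hA : Commute b A :=
    commute_sigma_Pi' fun j hj _ => (sigma_commute hj (by omega) (by omega)).symm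
  calc Pi' n 1 (n - 1) * a = A * (a * b * a) * T := by
        rw [hPi, mul_assoc A, mul_assoc a, mul_assoc b, ← hT.eq]; group
    _ = A * (b * a * b) * T := by rw [sigma_braid h1 h2]
    _ = b * Pi' n 1 (n - 1) := by rw [hPi, ← mul_assoc b A, hA.eq]; group

lemma Pi_pow_semiconjBy_sigma (k : ℕ) {i : ℕ} (h1 : 1 ≤ i) (h2 : i + k + 1 ≤ n) :
    SemiconjBy (Pi' n 1 (n - 1) ^ k) (sigma n i) (sigma n (i + k)) := by
  induction k with
  | zero => simp
  | succ k ih =>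
    rw [pow_succ', ← add_assoc]
    exact (Pi_semiconjBy_sigma (by omega) (by omega)).mul_left (ih (by omega))

lemma Pi_pow_semiconjBy_Pi' (k : ℕ) {l s : ℕ} (hl : 1 ≤ l) (hs : s + k + 1 ≤ n) :
    SemiconjBy (Pi' n 1 (n - 1) ^ k) (Pi' n l s) (Pi' n (l + k) (s + k)) := by
  rw [Pi'.eq_1 n l s, Pi'.eq_1 n (l + k) (s + k), show s + k + 1 - (l + k) = s + 1 - l by omega,
    add_comm l k, ← List.map_add_range', List.map_map]
  refine SemiconjBy.list_prod_map _ fun i hi => ?_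
  rw [List.mem_range'_1] at hi
  simpa [add_comm k i] using Pi_pow_semiconjBy_sigma k (n := n) (i := i) (by omega) (by omega)

end ArtinGenerators

lemma inv_Pi_pow_mul_Pi_pow {q r k : ℕ} (hrq : r < q) (hk : k ≤ r) :
    (Pi' q 1 (r - 1))⁻¹ ^ k * Pi' q 1 (q - 1) ^ k =
      ((List.range k).map fun j => Pi' q (r - j) (q - 1 - j)).prod := by
  induction k with
  | zero => simp
  | succ k ih =>
    have hPi : (Pi' q 1 (r - 1))⁻¹ * Pi' q 1 (q - 1) = Pi' q r (q - 1) := by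
      rw [Pi'_eq_mul (l := 1) (m := r - 1) (s := q - 1) (by omega) (by omega),
        Nat.sub_add_cancel (by omega), inv_mul_cancel_left]
    have hshift := Pi_pow_semiconjBy_Pi' (n := q) k (l := r - k) (s := q - 1 - k) (by omega)
      (by omega)
    rw [Nat.sub_add_cancel (by omega), Nat.sub_add_cancel (by omega)] at hshift
    calc (Pi' q 1 (r - 1))⁻¹ ^ (k + 1) * Pi' q 1 (q - 1) ^ (k + 1)
        = (Pi' q 1 (r - 1))⁻¹ ^ k * (Pi' q r (q - 1) * Pi' q 1 (q - 1) ^ k) := by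
          rw [← hPi, pow_succ, pow_succ']; group
      _ = (Pi' q 1 (r - 1))⁻¹ ^ k * Pi' q 1 (q - 1) ^ k * Pi' q (r - k) (q - 1 - k) := by
          rw [← hshift.eq, mul_assoc]
      _ = _ := by
          rw [ih (by omega), List.range_succ, List.map_append, List.prod_append,
            List.map_singleton, List.prod_singleton]

def positiveBraids (q : ℕ) : Submonoid (BraidGroup q) where
  carrier := {g | ∃ w : List ℕ, (∀ i ∈ w, 1 ≤ i ∧ i < q) ∧ g = (w.map (sigma q)).prod}
  one_mem' := ⟨[], by simp, by simp⟩
  mul_mem' := by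
    rintro _ _ ⟨w₁, hw₁, rfl⟩ ⟨w₂, hw₂, rfl⟩
    exact ⟨w₁ ++ w₂, fun i hi => (List.mem_append.mp hi).elim (hw₁ i) (hw₂ i), by simp⟩

lemma Pi'_mem_positiveBraids {q l s : ℕ} (hl : 1 ≤ l) (hs : s < q) :
    Pi' q l s ∈ positiveBraids q :=
  ⟨List.range' l (s + 1 - l), fun i hi => by rw [List.mem_range'_1] at hi; omega, rfl⟩

theorem stmt6_general (q r p : ℕ) (hrq : r < q) (hp : r ≤ p) :
    ((Pi' q 1 (r - 1))⁻¹) ^ r * (Pi' q 1 (q - 1)) ^ p =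
        ((List.range r).map (fun j => Pi' q (r - j) (q - 1 - j))).prod * (Pi' q 1 (q - 1)) ^ (p - r) ∧
      ∃ w : List ℕ, (∀ i ∈ w, 1 ≤ i ∧ i < q) ∧
        ((Pi' q 1 (r - 1))⁻¹) ^ r * (Pi' q 1 (q - 1)) ^ p = (w.map (sigma q)).prod := by
  have hfactor : ((Pi' q 1 (r - 1))⁻¹) ^ r * (Pi' q 1 (q - 1)) ^ p =
      ((List.range r).map (fun j => Pi' q (r - j) (q - 1 - j))).prod
        * (Pi' q 1 (q - 1)) ^ (p - r) := by
    rw [← Nat.add_sub_cancel' hp, pow_add, ← mul_assoc, inv_Pi_pow_mul_Pi_pow hrq le_rfl,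
      Nat.add_sub_cancel_left]
  refine ⟨hfactor, hfactor ▸ Submonoid.mul_mem _ (Submonoid.list_prod_mem _ ?_)
    (Submonoid.pow_mem _ (Pi'_mem_positiveBraids le_rfl (by omega)) _)⟩
  simp only [List.mem_map, List.mem_range]
  rintro _ ⟨j, hj, rfl⟩
  exact Pi'_mem_positiveBraids (by omega) (by omega)

theorem stmt6 (q r p : ℕ) (hr : 2 ≤ r) (hrq : r < q) (hp : r ≤ p) :
    ((Pi' q 1 (r - 1))⁻¹) ^ r * (Pi' q 1 (q - 1)) ^ p =
        ((List.range r).map (fun j => Pi' q (r - j) (q - 1 - j))).prod * (Pi' q 1 (q - 1)) ^ (p - r) ∧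
      ∃ w : List ℕ, (∀ i ∈ w, 1 ≤ i ∧ i < q) ∧
        ((Pi' q 1 (r - 1))⁻¹) ^ r * (Pi' q 1 (q - 1)) ^ p = (w.map (sigma q)).prod :=
  stmt6_general q r p hrq hp
end

section
/- In the braid group B_q, for 1 ≤ m ≤ q−1, the identity Π_{q-1}^{q-m} · Π_{q-2}^{q-m-1} ⋯ Π_{m+1}^2 · Π_m · Δ_{q-1}^{m+1} · Δ_{m-1} = Δ_{q-1} holds. -/
/-! Write `Π_s = Π_s^1`. Conjugation by `Π_s` shifts every generator `σ_i` with `1 ≤ i < s` to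
`σ_{i+1}`, hence shifts `Π_{s'}^{l'}` to `Π_{s'+1}^{l'+1}` for `1 ≤ l'`, `s' < s`. The leading word for
`q + 1` is therefore the conjugate by `Π_q` of the leading word for `q`, followed by `Π_m`. Together
with `Δ_q^l = Π_q^l Δ_{q-1}^l` and `Π_m Π_q^{m+1} = Π_q`, this gives the identity by induction on
`q ≥ m`. -/

namespace BraidGroup

variable {n : ℕ}

theorem sigma_zero : sigma n 0 = 1 :=
  PresentedGroup.one_of_mem (Or.inr (Or.inr ⟨0, Or.inl rfl, rfl⟩))

theorem sigma_of_le {i : ℕ} (h : n ≤ i) : sigma n i = 1 :=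
  PresentedGroup.one_of_mem (Or.inr (Or.inr ⟨i, Or.inr h, rfl⟩))

theorem sigma_braid {i : ℕ} (h1 : 1 ≤ i) (h2 : i + 2 ≤ n) :
    sigma n i * sigma n (i + 1) * sigma n i =
      sigma n (i + 1) * sigma n i * sigma n (i + 1) :=
  PresentedGroup.mk_eq_mk_of_mul_inv_mem (Or.inl ⟨i, h1, h2, rfl⟩)

theorem sigma_commute {i j : ℕ} (h : i + 2 ≤ j) : Commute (sigma n i) (sigma n j) := by
  rcases Nat.eq_zero_or_pos i with rfl | hi
  · rw [sigma_zero]; exact Commute.one_left _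
  rcases le_or_gt n j with hj | hj
  · rw [sigma_of_le hj]; exact Commute.one_right _
  · exact PresentedGroup.mk_eq_mk_of_mul_inv_mem (Or.inr (Or.inl ⟨i, j, hi, h, hj, rfl⟩))

theorem Pi'_of_lt {l s : ℕ} (h : s < l) : Pi' n l s = 1 := by
  rw [Pi', Nat.sub_eq_zero_of_le h, List.range'_zero, List.map_nil, List.prod_nil]

theorem Pi'_self (l : ℕ) : Pi' n l l = sigma n l := by
  simp [Pi']

theorem Pi'_mul_Pi' {l m s : ℕ} (h1 : l ≤ m + 1) (h2 : m ≤ s) :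
    Pi' n l m * Pi' n (m + 1) s = Pi' n l s := by
  rw [Pi', Pi', Pi', ← List.prod_append, ← List.map_append,
    show s + 1 - l = m + 1 - l + (s + 1 - (m + 1)) by omega, ← List.range'_append_1,
    show l + (m + 1 - l) = m + 1 by omega]

theorem Pi'_commute_sigma {l s j : ℕ} (h : s + 2 ≤ j ∨ j + 2 ≤ l) :
    Commute (Pi' n l s) (sigma n j) := by
  refine Commute.list_prod_left _ _ fun x hx => ?_
  obtain ⟨i, hi, rfl⟩ := List.mem_map.1 hx
  rw [List.mem_range'_1] at hi
  rcases h with h | h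
  · exact sigma_commute (by omega)
  · exact (sigma_commute (by omega)).symm

theorem conj_Pi'_sigma {l s i : ℕ} (hi : 1 ≤ i) (hl : l ≤ i) (hs : i < s) (hn : s < n) :
    MulAut.conj (Pi' n l s) (sigma n i) = sigma n (i + 1) := by
  set A := Pi' n l (i - 1)
  set B := Pi' n (i + 1 + 1) s
  have hsplit : Pi' n l s = A * (sigma n i * sigma n (i + 1)) * B := by
    have hσ := Pi'_mul_Pi' (n := n) (l := i) (m := i) (s := i + 1) (by omega) (by omega)
    have hA := Pi'_mul_Pi' (n := n) (l := l) (m := i - 1) (s := i + 1) (by omega) (by omega)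
    have hB := Pi'_mul_Pi' (n := n) (l := l) (m := i + 1) (s := s) (by omega) (by omega)
    rw [Pi'_self, Pi'_self] at hσ
    rw [Nat.sub_add_cancel hi] at hA
    rw [← hB, ← hA, ← hσ]
  have hA : Commute A (sigma n (i + 1)) := Pi'_commute_sigma (.inl (by omega))
  have hB : Commute B (sigma n i) := Pi'_commute_sigma (.inr (by omega))
  rw [MulAut.conj_apply, mul_inv_eq_iff_eq_mul, hsplit]
  calc A * (sigma n i * sigma n (i + 1)) * B * sigma n i
      = A * (sigma n i * sigma n (i + 1) * sigma n i) * B := by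
        simp only [mul_assoc, hB.eq]
    _ = A * (sigma n (i + 1) * sigma n i * sigma n (i + 1)) * B := by
        rw [sigma_braid hi (by omega)]
    _ = sigma n (i + 1) * (A * (sigma n i * sigma n (i + 1)) * B) := by
        simp only [← mul_assoc, hA.eq]

theorem conj_Pi'_Pi' {s l' s' : ℕ} (hl' : 1 ≤ l') (hs' : s' < s) (hn : s < n) :
    MulAut.conj (Pi' n 1 s) (Pi' n l' s') = Pi' n (l' + 1) (s' + 1) := by
  rw [Pi'.eq_1 n l', Pi'.eq_1 n (l' + 1), map_list_prod, List.map_map,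
    show s' + 1 + 1 - (l' + 1) = s' + 1 - l' by omega, List.range'_succ_left, List.map_map]
  refine congrArg List.prod (List.map_congr_left fun i hi => ?_)
  rw [List.mem_range'_1] at hi
  exact conj_Pi'_sigma (by omega) (by omega) (by omega) hn

theorem Delta_of_lt {l s : ℕ} (h : s < l) : Delta n l s = 1 := by
  rw [Delta, Nat.sub_eq_zero_of_le h, List.range_zero, List.map_nil, List.prod_nil]

theorem Pi'_mul_Delta {l : ℕ} (s : ℕ) (hl : 1 ≤ l) :
    Pi' n l s * Delta n l (s - 1) = Delta n l s := by
  rcases lt_or_ge s l with h | h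
  · rw [Pi'_of_lt h, Delta_of_lt h, Delta_of_lt (by omega), one_mul]
  · rw [Delta, Delta, show s + 1 - l = s - 1 + 1 - l + 1 by omega, List.prod_range_succ',
      Nat.sub_zero]
    congr 2
    exact List.map_congr_left fun k _ => congrArg (Pi' n l) (by omega)

/-- `Π_{q-1}^{q-m} Π_{q-2}^{q-m-1} ⋯ Π_m`, with `q - m` factors. -/
def leadingWord (n q m : ℕ) : BraidGroup n :=
  ((List.range (q - m)).map (fun j => Pi' n (q - m - j) (q - 1 - j))).prod

theorem leadingWord_self (m : ℕ) : leadingWord n m m = 1 := by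
  rw [leadingWord, Nat.sub_self, List.range_zero, List.map_nil, List.prod_nil]

theorem leadingWord_succ {q m : ℕ} (hmq : m ≤ q) (hqn : q < n) :
    leadingWord n (q + 1) m = MulAut.conj (Pi' n 1 q) (leadingWord n q m) * Pi' n 1 m := by
  rw [leadingWord, leadingWord, show q + 1 - m = q - m + 1 by omega, List.prod_range_succ,
    map_list_prod, List.map_map]
  congr 1
  · refine congrArg List.prod (List.map_congr_left fun j hj => ?_)
    rw [List.mem_range] at hj
    rw [Function.comp_apply, conj_Pi'_Pi' (by omega) (by omega) hqn]
    congr 1 <;> omega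
  · congr 1 <;> omega

theorem leadingWord_mul_Delta_mul_Delta {q : ℕ} (m : ℕ) (hmq : m ≤ q) (hqn : q ≤ n) :
    leadingWord n q m * (Delta n (m + 1) (q - 1) * Delta n 1 (m - 1)) = Delta n 1 (q - 1) := by
  induction q, hmq using Nat.le_induction with
  | base => rw [leadingWord_self, Delta_of_lt (by omega), one_mul, one_mul]
  | succ q hmq ih =>
    rw [Nat.add_sub_cancel, leadingWord_succ hmq (by omega), ← Pi'_mul_Delta q (by omega)]
    calc MulAut.conj (Pi' n 1 q) (leadingWord n q m) * Pi' n 1 m *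
          (Pi' n (m + 1) q * Delta n (m + 1) (q - 1) * Delta n 1 (m - 1))
        = MulAut.conj (Pi' n 1 q) (leadingWord n q m) * Pi' n 1 q *
          (Delta n (m + 1) (q - 1) * Delta n 1 (m - 1)) := by
          rw [← Pi'_mul_Pi' (l := 1) (by omega) hmq]; simp only [mul_assoc]
      _ = Pi' n 1 q * (leadingWord n q m * (Delta n (m + 1) (q - 1) * Delta n 1 (m - 1))) := by
          rw [MulAut.conj_apply, inv_mul_cancel_right, mul_assoc]
      _ = Delta n 1 q := by rw [ih (by omega), Pi'_mul_Delta q le_rfl]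

end BraidGroup

theorem stmt14_general (q m : ℕ) (hmq : m ≤ q - 1) :
    ((List.range (q - m)).map (fun j => Pi' q (q - m - j) (q - 1 - j))).prod * (Delta q (m + 1) (q - 1) * Delta q 1 (m - 1)) = Delta q 1 (q - 1) :=
  BraidGroup.leadingWord_mul_Delta_mul_Delta m (by omega) le_rfl

theorem stmt14 (q m : ℕ) (hm : 1 ≤ m) (hmq : m ≤ q - 1) :
    ((List.range (q - m)).map (fun j => Pi' q (q - m - j) (q - 1 - j))).prod * (Delta q (m + 1) (q - 1) * Delta q 1 (m - 1)) = Delta q 1 (q - 1) :=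
  stmt14_general q m hmq
end
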